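/- A wiring F in the Stack semiring is cyclic if and only if the increasing part sat(F)↑ of its saturation or the decreasing part sat(F)↓ of its saturation is cyclic. -/

import Mathlib

/-!  Base definitions for the Stack semiring: unary flows ("stack operations")
`τ(x) ⊣ σ(x)` are modelled as pairs of lists of unary function symbols
(outermost symbol first).  The resolution product of two stack operations is
defined when one of the two sequences to be unified is a prefix of the other. -/

/-- A stack operation `τ(x) ⊣ σ(x)`: the first component is the head/left term
`τ(x)`, the second the body/right term `σ(x)`, each a sequence of unary
function symbols applied to the variable `x` (outermost first). -/
abbrev SOp := List ℕ × List ℕ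

/-- Resolution product of stack operations (`none` = undefined = 0).
`(τ ⊣ σ)(ρ ⊣ χ)` unifies `σ(x)` with `ρ(y)`. -/
def scomp (f g : SOp) : Option SOp :=
  if f.2 <+: g.1 then some (f.1 ++ g.1.drop f.2.length, g.2)
  else if g.1 <+: f.2 then some (f.1, g.2 ++ f.2.drop g.1.length)
  else none

/-- Height of a stack operation: max of the heights of its two terms. -/
def hOp (f : SOp) : ℕ := max f.1.length f.2.length

/-- A stack operation is a cycle iff its two terms are matchable, which for
unary terms `τ(x)`, `σ(y)` means one sequence is a prefix of the other. -/
def isCycleS (f : SOp) : Prop := f.1 <+: f.2 ∨ f.2 <+: f.1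

/-- `f` is increasing when `h(τ(x)) ≥ h(σ(x))`. -/
def incP (f : SOp) : Prop := f.2.length ≤ f.1.length

/-- `f` is decreasing when `h(τ(x)) ≤ h(σ(x))`. -/
def decP (f : SOp) : Prop := f.1.length ≤ f.2.length

instance : DecidablePred incP := fun f => inferInstanceAs (Decidable (_ ≤ _))
instance : DecidablePred decP := fun f => inferInstanceAs (Decidable (_ ≤ _))

/-- A wiring of the Stack semiring: a finite set (sum) of stack operations. -/
abbrev SWiring := Finset SOp

/-- Product of wirings: pointwise products of flows, keeping defined ones. -/
def smul (F G : SWiring) : SWiring :=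
  (F ×ˢ G).biUnion fun p => (scomp p.1 p.2).toFinset

/-- Powers of a wiring (`spow F 0` is the unit wiring `{x ⊣ x}`). -/
def spow (F : SWiring) : ℕ → SWiring
  | 0 => {(([] : List ℕ), ([] : List ℕ))}
  | n + 1 => smul (spow F n) F

/-- Nilpotency: some (positive) power is 0, i.e. the empty wiring. -/
def SNilpotent (F : SWiring) : Prop := ∃ n, 0 < n ∧ spow F n = ∅

/-- Cyclicity: some power contains a cycle. -/
def SCyclic (F : SWiring) : Prop := ∃ k, 0 < k ∧ ∃ f ∈ spow F k, isCycleS f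

/-- Increasing part of a wiring. -/
def incF (F : SWiring) : SWiring := F.filter incP

/-- Decreasing part of a wiring. -/
def decF (F : SWiring) : SWiring := F.filter decP

/-- The shortcut operation `short(F) = F + F↓·F↑`. -/
def short (F : SWiring) : SWiring := F ∪ smul (decF F) (incF F)

/-- Height of a wiring (0 for the empty wiring). -/
def wheightS (F : SWiring) : ℕ := F.sup hOp

/-- The function symbols occurring in a wiring. -/
def symbolsS (F : SWiring) : Finset ℕ :=
  F.biUnion fun f => f.1.toFinset ∪ f.2.toFinset

/-- Size of a wiring: total number of function symbol occurrences. -/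
def sizeS (F : SWiring) : ℕ := ∑ f ∈ F, (f.1.length + f.2.length)

/-- The saturation `sat(F) = Σₙ shortⁿ(F)`, least fixpoint of `short`
containing `F`. -/
def satSet (F : SWiring) : Set SOp := ⋃ n, (short^[n] F : Finset SOp)

/-- Powers of a set of stack operations. -/
def spowSet (A : Set SOp) : ℕ → Set SOp
  | 0 => {(([] : List ℕ), ([] : List ℕ))}
  | n + 1 => {h | ∃ f ∈ spowSet A n, ∃ g ∈ A, scomp f g = some h}

/-- Cyclicity for a set of stack operations. -/
def SetCyclic (A : Set SOp) : Prop :=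
  ∃ k, 0 < k ∧ ∃ f ∈ spowSet A k, isCycleS f


/-! Adjoining a zero, stack operations form a monoid: `τ ⊣ σ` acts faithfully on stacks as the
partial map `σ w ↦ τ w`, and `scomp` is composition of these maps, so it is associative.
An operation is a cycle exactly when its square is defined, and a defined square is always a
cycle. Hence if `ab` is a cycle then `(ab)⁴ = a (ba)³ b ≠ 0`, so `(ba)² ≠ 0` and `ba` is a cycle:
cyclicity of a word is invariant under rotation.

A cyclic word over `sat(F)` mixing strictly increasing and strictly decreasing letters has a
rotation starting with a decreasing letter followed by a strictly increasing one; their product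
is again in `sat(F)`, so the word gets shorter. Conversely, every element of `sat(F)` is a
nonempty product of elements of `F`. -/

open List

namespace SOp

def act (f : SOp) (s : List ℕ) : Option (List ℕ) :=
  if f.2 <+: s then some (f.1 ++ s.drop f.2.length) else none

lemma act_eq_none {f : SOp} {s : List ℕ} (h : ¬f.2 <+: s) : act f s = none := if_neg h

lemma act_append_append (τ p σ w : List ℕ) : act (τ, p ++ σ) (p ++ w) = act (τ, σ) w := by
  simp [act, List.prefix_append_right_inj]

lemma act_self_append (τ σ w : List ℕ) : act (τ, σ) (σ ++ w) = some (τ ++ w) := by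
  simp [act]

lemma bind_act_scomp (f g : SOp) (s : List ℕ) :
    (scomp f g).bind (act · s) = (act g s).bind (act f) := by
  obtain ⟨f₁, f₂⟩ := f
  obtain ⟨g₁, g₂⟩ := g
  by_cases hs : g₂ <+: s
  swap
  · rw [act_eq_none hs, Option.bind_none]
    unfold scomp
    split_ifs
    · exact act_eq_none hs
    · exact act_eq_none fun h => hs ((prefix_append _ _).trans h)
    · rfl
  obtain ⟨w, rfl⟩ := hs
  rw [act_self_append, Option.bind_some]
  unfold scomp
  split_ifs with h₁ h₂
  · obtain ⟨d, rfl⟩ := h₁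
    simp only [drop_left, Option.bind_some]
    rw [act_self_append, append_assoc, append_assoc, act_self_append]
  · obtain ⟨d, rfl⟩ := h₂
    simp [act_append_append]
  · refine (act_eq_none fun h => ?_).symm
    rcases prefix_or_prefix_of_prefix h (prefix_append g₁ w) with h | h
    exacts [h₁ h, h₂ h]

lemma eq_of_forall_bind_act {x y : Option SOp}
    (h : ∀ s, x.bind (act · s) = y.bind (act · s)) : x = y := by
  rcases x with _ | ⟨p₁, p₂⟩ <;> rcases y with _ | ⟨q₁, q₂⟩
  · rfl
  · simpa [act] using h q₂
  · simpa [act] using h p₂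
  · have hp := h p₂
    have hq := h q₂
    simp only [Option.bind_some, act, prefix_refl, if_true, drop_length, append_nil] at hp hq
    split_ifs at hp hq with hqp hpq
    obtain rfl := hpq.eq_of_length_le hqp.length_le
    simp_all

end SOp

lemma isCycleS_of_scomp_self {f g : SOp} (h : scomp f f = some g) : isCycleS g := by
  unfold scomp at h
  split_ifs at h with h₁ h₂ <;> cases h
  · exact Or.inr (h₁.trans (prefix_append _ _))
  · exact Or.inl (h₂.trans (prefix_append _ _))

/-- Stack operations together with a zero, `none`, standing for an undefined product. -/
def StackMonoid : Type := Option SOp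

namespace StackMonoid

open SOp

def of : SOp → StackMonoid := some

instance : Zero StackMonoid := ⟨none⟩

instance : One StackMonoid := ⟨of ([], [])⟩

lemma one_def : (1 : StackMonoid) = of ([], []) := rfl

instance : Mul StackMonoid := ⟨fun x y => Option.bind x fun f => Option.bind y (scomp f)⟩

lemma of_mul_of (f g : SOp) : of f * of g = (scomp f g : StackMonoid) := rfl

lemma of_ne_zero (f : SOp) : of f ≠ 0 := Option.some_ne_none f

lemma of_injective : Function.Injective of := Option.some_injective _

lemma exists_eq_of {x : StackMonoid} (hx : x ≠ 0) : ∃ f, x = of f :=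
  Option.ne_none_iff_exists'.1 hx

def eval (x : StackMonoid) (s : List ℕ) : Option (List ℕ) := Option.bind x (act · s)

lemma eval_injective : Function.Injective eval :=
  fun _ _ h => eq_of_forall_bind_act (congrFun h)

lemma eval_one (s : List ℕ) : eval 1 s = some s := by
  simp [eval, act, one_def, of]

lemma eval_mul (x y : StackMonoid) (s : List ℕ) : eval (x * y) s = (eval y s).bind (eval x) := by
  rcases x with _ | f
  · exact (Option.bind_fun_none _).symm
  rcases y with _ | g
  · rfl
  exact bind_act_scomp f g s

instance : MonoidWithZero StackMonoid where
  mul_assoc x y z := eval_injective <| funext fun s => by simp only [eval_mul, Option.bind_assoc]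
  one_mul x := eval_injective <| funext fun s => by simp [eval_mul, eval_one]
  mul_one x := eval_injective <| funext fun s => by simp [eval_mul, eval_one]
  zero_mul _ := rfl
  mul_zero x := by cases x <;> rfl

lemma of_mul_self_ne_zero_iff {f : SOp} : of f * of f ≠ 0 ↔ isCycleS f := by
  change scomp f f ≠ none ↔ f.1 <+: f.2 ∨ f.2 <+: f.1
  unfold scomp
  split_ifs <;> simp_all

lemma mul_self_mul_self_ne_zero {x : StackMonoid} (hx : x * x ≠ 0) : x * x * (x * x) ≠ 0 := by
  obtain ⟨f, rfl⟩ := exists_eq_of (left_ne_zero_of_mul hx)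
  obtain ⟨g, hg⟩ := exists_eq_of hx
  rw [hg, of_mul_self_ne_zero_iff]
  exact isCycleS_of_scomp_self hg

lemma mul_self_ne_zero_comm {a b : StackMonoid} (h : a * b * (a * b) ≠ 0) :
    b * a * (b * a) ≠ 0 := by
  have h₄ := mul_self_mul_self_ne_zero h
  have : a * b * (a * b) * (a * b * (a * b)) = a * (b * a * (b * a) * (b * a)) * b := by
    simp only [mul_assoc]
  rw [this] at h₄
  exact left_ne_zero_of_mul (right_ne_zero_of_mul (left_ne_zero_of_mul h₄))

def wordProd (L : List SOp) : StackMonoid := (L.map of).prod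

@[simp] lemma wordProd_nil : wordProd [] = 1 := rfl

@[simp] lemma wordProd_singleton (f : SOp) : wordProd [f] = of f := mul_one _

@[simp] lemma wordProd_cons (f : SOp) (L : List SOp) : wordProd (f :: L) = of f * wordProd L :=
  List.prod_cons

@[simp] lemma wordProd_append (L M : List SOp) : wordProd (L ++ M) = wordProd L * wordProd M := by
  simp [wordProd]

lemma _root_.List.IsRotated.wordProd_mul_self_ne_zero {L L' : List SOp} (h : L ~r L')
    (hL : wordProd L * wordProd L ≠ 0) : wordProd L' * wordProd L' ≠ 0 := by
  obtain ⟨n, rfl⟩ := h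
  rw [← take_append_drop (n % L.length) L, wordProd_append] at hL
  rw [rotate_eq_drop_append_take_mod, wordProd_append]
  exact mul_self_ne_zero_comm hL

end StackMonoid

open StackMonoid

lemma mem_spowSet {A : Set SOp} {n : ℕ} {f : SOp} :
    f ∈ spowSet A n ↔ ∃ L : List SOp, L.length = n ∧ (∀ x ∈ L, x ∈ A) ∧ wordProd L = of f := by
  induction n generalizing f with
  | zero => simp [spowSet, one_def, of_injective.eq_iff, eq_comm]
  | succ n ih =>
    simp only [spowSet, Set.mem_ofPred_eq, ih]
    constructor
    · rintro ⟨g, ⟨L, rfl, hLA, hL⟩, a, ha, hga⟩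
      refine ⟨L ++ [a], by simp, ?_, ?_⟩
      · simpa [or_imp, forall_and] using And.intro hLA ha
      · rw [wordProd_append, hL, wordProd_singleton, of_mul_of, hga]
        rfl
    · intro ⟨L, hlen, hLA, hL⟩
      obtain ⟨M, a, rfl⟩ := (eq_nil_or_concat' L).resolve_left (by rintro rfl; simp at hlen)
      rw [wordProd_append, wordProd_singleton] at hL
      obtain ⟨g, hg⟩ := exists_eq_of (left_ne_zero_of_mul (hL ▸ of_ne_zero f))
      rw [hg, of_mul_of] at hL
      exact ⟨g, ⟨M, by simpa using hlen, fun x hx => hLA x (by simp [hx]), hg⟩, a,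
        hLA a (by simp), hL⟩

lemma mul_self_ne_zero_iff_exists_isCycleS {x : StackMonoid} :
    x * x ≠ 0 ↔ ∃ f, x = of f ∧ isCycleS f := by
  refine ⟨fun hx => ?_, fun ⟨f, hx, hf⟩ => hx ▸ of_mul_self_ne_zero_iff.2 hf⟩
  obtain ⟨f, rfl⟩ := exists_eq_of (left_ne_zero_of_mul hx)
  exact ⟨f, rfl, of_mul_self_ne_zero_iff.1 hx⟩

lemma setCyclic_iff {A : Set SOp} :
    SetCyclic A ↔ ∃ L ≠ [], (∀ x ∈ L, x ∈ A) ∧ wordProd L * wordProd L ≠ 0 := by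
  simp only [SetCyclic, mem_spowSet, mul_self_ne_zero_iff_exists_isCycleS]
  constructor
  · rintro ⟨k, hk, f, ⟨L, rfl, hLA, hL⟩, hf⟩
    exact ⟨L, ne_nil_of_length_pos hk, hLA, f, hL, hf⟩
  · rintro ⟨L, hL, hLA, f, hLf, hf⟩
    exact ⟨L.length, length_pos_iff.2 hL, f, ⟨L, rfl, hLA, hLf⟩, hf⟩

lemma SetCyclic.mono {A B : Set SOp} (hAB : A ⊆ B) (h : SetCyclic A) : SetCyclic B := by
  obtain ⟨L, hL, hLA, hcyc⟩ := setCyclic_iff.1 h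
  exact setCyclic_iff.2 ⟨L, hL, fun x hx => hAB (hLA x hx), hcyc⟩

lemma mem_smul {F G : SWiring} {h : SOp} :
    h ∈ smul F G ↔ ∃ f ∈ F, ∃ g ∈ G, scomp f g = some h := by
  simp [smul]

lemma coe_spow (F : SWiring) (n : ℕ) : (spow F n : Set SOp) = spowSet F n := by
  induction n with
  | zero => simp [spow, spowSet]
  | succ n ih => ext h; simp [spow, spowSet, mem_smul, ← ih]

lemma sCyclic_iff_setCyclic {F : SWiring} : SCyclic F ↔ SetCyclic F := by
  simp [SCyclic, SetCyclic, ← coe_spow]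

namespace List

lemma exists_eq_append_cons_cons {α : Type*} {p : α → Prop} {a : α} {l : List α} (ha : p a)
    (hl : ∃ b ∈ l, ¬p b) : ∃ u x y v, a :: l = u ++ x :: y :: v ∧ p x ∧ ¬p y := by
  induction l generalizing a with
  | nil => simp at hl
  | cons b l ih =>
    by_cases hb : p b
    · obtain ⟨u, x, y, v, hl', hx, hy⟩ := ih hb (by simpa [hb] using hl)
      exact ⟨a :: u, x, y, v, by rw [hl', cons_append], hx, hy⟩
    · exact ⟨[], a, b, l, rfl, ha, hb⟩

lemma exists_isRotated_cons_cons {α : Type*} {p : α → Prop} {L : List α} (ha : ∃ a ∈ L, p a)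
    (hb : ∃ b ∈ L, ¬p b) : ∃ x y t, L ~r x :: y :: t ∧ p x ∧ ¬p y := by
  obtain ⟨a, haL, ha⟩ := ha
  obtain ⟨u, v, rfl⟩ := append_of_mem haL
  obtain ⟨u', x, y, v', huv, hx, hy⟩ := exists_eq_append_cons_cons (l := v ++ u) ha <| by
    obtain ⟨b, hbL, hb⟩ := hb
    have hba : b ≠ a := fun h => hb (h ▸ ha)
    exact ⟨b, by simpa [hba, or_comm] using hbL, hb⟩
  have h₁ : u ++ a :: v ~r a :: (v ++ u) := isRotated_append
  have h₂ : u' ++ x :: y :: v' ~r x :: y :: (v' ++ u') := isRotated_append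
  rw [huv] at h₁
  exact ⟨x, y, v' ++ u', h₁.trans h₂, hx, hy⟩

end List

def ShortcutClosed (S : Set SOp) : Prop :=
  ∀ ⦃d i z⦄, d ∈ S → i ∈ S → decP d → incP i → scomp d i = some z → z ∈ S

lemma wordProd_cons_cons_of_scomp {f g z : SOp} (h : scomp f g = some z) (t : List SOp) :
    wordProd (f :: g :: t) = wordProd (z :: t) := by
  rw [wordProd_cons, wordProd_cons, wordProd_cons, ← mul_assoc, of_mul_of, h]
  rfl

theorem SetCyclic.inc_or_dec {S : Set SOp} (hS : ShortcutClosed S) (h : SetCyclic S) :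
    SetCyclic {f ∈ S | incP f} ∨ SetCyclic {f ∈ S | decP f} := by
  obtain ⟨L, hne, hLS, hL⟩ := setCyclic_iff.1 h
  induction hn : L.length using Nat.strong_induction_on generalizing L with
  | _ n ih =>
  by_cases hinc : ∀ x ∈ L, incP x
  · exact Or.inl (setCyclic_iff.2 ⟨L, hne, fun x hx => ⟨hLS x hx, hinc x hx⟩, hL⟩)
  by_cases hdec : ∀ x ∈ L, decP x
  · exact Or.inr (setCyclic_iff.2 ⟨L, hne, fun x hx => ⟨hLS x hx, hdec x hx⟩, hL⟩)
  push Not at hinc hdec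
  obtain ⟨a, haL, ha⟩ := hinc
  obtain ⟨d, i, t, hrot, hd, hi⟩ :=
    exists_isRotated_cons_cons (p := decP) ⟨a, haL, le_of_not_ge ha⟩ hdec
  have hrotL := hrot.wordProd_mul_self_ne_zero hL
  have hmem : ∀ {x}, x ∈ d :: i :: t → x ∈ S := fun hx => hLS _ (hrot.perm.mem_iff.2 hx)
  obtain ⟨z, hz⟩ : ∃ z, scomp d i = some z := by
    refine exists_eq_of (left_ne_zero_of_mul (a := of d * of i)
      (b := wordProd t * wordProd (d :: i :: t)) ?_)
    simpa only [wordProd_cons, mul_assoc] using hrotL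
  rw [wordProd_cons_cons_of_scomp hz] at hrotL
  refine ih _ ?_ (z :: t) (cons_ne_nil z t) ?_ hrotL rfl
  · simp [← hn, hrot.perm.length_eq]
  · simp only [mem_cons]
    rintro x (rfl | hx)
    exacts [hS (hmem (by simp)) (hmem (by simp)) hd (le_of_not_ge hi) hz, hmem (by simp [hx])]

lemma exists_wordProd_eq_of_forall_mem {A B : Set SOp}
    (hB : ∀ x ∈ B, ∃ M ≠ [], (∀ y ∈ M, y ∈ A) ∧ wordProd M = of x) :
    ∀ L : List SOp, (∀ x ∈ L, x ∈ B) →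
      ∃ M, (L ≠ [] → M ≠ []) ∧ (∀ y ∈ M, y ∈ A) ∧ wordProd M = wordProd L
  | [], _ => ⟨[], fun h => h, by simp, rfl⟩
  | x :: L, hL => by
    obtain ⟨Mx, hMx, hMxA, hx⟩ := hB x (hL x mem_cons_self)
    obtain ⟨ML, -, hMLA, hML⟩ :=
      exists_wordProd_eq_of_forall_mem hB L fun y hy => hL y (mem_cons_of_mem x hy)
    exact ⟨Mx ++ ML, fun _ => by simp [hMx], fun y hy => (mem_append.1 hy).elim (hMxA y) (hMLA y),
      by rw [wordProd_append, hx, hML, wordProd_cons]⟩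

lemma SetCyclic.of_forall_exists_wordProd {A B : Set SOp}
    (hB : ∀ x ∈ B, ∃ M ≠ [], (∀ y ∈ M, y ∈ A) ∧ wordProd M = of x) (h : SetCyclic B) :
    SetCyclic A := by
  obtain ⟨L, hL, hLB, hcyc⟩ := setCyclic_iff.1 h
  obtain ⟨M, hM, hMA, hML⟩ := exists_wordProd_eq_of_forall_mem hB L hLB
  exact setCyclic_iff.2 ⟨M, hM hL, hMA, hML ▸ hcyc⟩

lemma monotone_short_iterate (F : SWiring) : Monotone (short^[·] F) :=
  monotone_nat_of_le_succ fun n => by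
    rw [Function.iterate_succ_apply']
    exact Finset.subset_union_left

lemma subset_satSet (F : SWiring) : (F : Set SOp) ⊆ satSet F :=
  Set.subset_iUnion_of_subset 0 subset_rfl

lemma shortcutClosed_satSet (F : SWiring) : ShortcutClosed (satSet F) := by
  intro d i z hd hi hdd hii hz
  simp only [satSet, Set.mem_iUnion, Finset.mem_coe] at hd hi ⊢
  obtain ⟨m, hm⟩ := hd
  obtain ⟨n, hn⟩ := hi
  refine ⟨max m n + 1, ?_⟩
  rw [Function.iterate_succ_apply']
  refine Finset.mem_union_right _ (mem_smul.2 ⟨d, ?_, i, ?_, hz⟩)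
  · exact Finset.mem_filter.2 ⟨monotone_short_iterate F (le_max_left m n) hm, hdd⟩
  · exact Finset.mem_filter.2 ⟨monotone_short_iterate F (le_max_right m n) hn, hii⟩

lemma exists_wordProd_eq_of_mem_satSet {F : SWiring} {x : SOp} (hx : x ∈ satSet F) :
    ∃ M ≠ [], (∀ y ∈ M, y ∈ F) ∧ wordProd M = of x := by
  simp only [satSet, Set.mem_iUnion, Finset.mem_coe] at hx
  obtain ⟨n, hn⟩ := hx
  induction n generalizing x with
  | zero => exact ⟨[x], cons_ne_nil x [], by simpa using hn, wordProd_singleton x⟩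
  | succ n ih =>
    rw [Function.iterate_succ_apply', short, Finset.mem_union, mem_smul] at hn
    obtain hn | ⟨d, hd, i, hi, hx⟩ := hn
    · exact ih hn
    obtain ⟨Md, hMd, hMdF, hd⟩ := ih (Finset.mem_filter.1 hd).1
    obtain ⟨Mi, -, hMiF, hi⟩ := ih (Finset.mem_filter.1 hi).1
    refine ⟨Md ++ Mi, by simp [hMd], fun y hy => (mem_append.1 hy).elim (hMdF y) (hMiF y), ?_⟩
    rw [wordProd_append, hd, hi, of_mul_of, hx]
    rfl

/-- cyclicity and saturation: `F` is cyclic iff the increasing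
part or the decreasing part of its saturation is cyclic. -/
theorem cyclic_iff_saturation (F : SWiring) :
    SCyclic F ↔
      SetCyclic {f ∈ satSet F | incP f} ∨ SetCyclic {f ∈ satSet F | decP f} := by
  rw [sCyclic_iff_setCyclic]
  refine ⟨fun h => (h.mono (subset_satSet F)).inc_or_dec (shortcutClosed_satSet F), ?_⟩
  have hsat : SetCyclic (satSet F) → SetCyclic F :=
    .of_forall_exists_wordProd fun _ => exists_wordProd_eq_of_mem_satSet
  rintro (h | h) <;> exact hsat (h.mono fun _ hf => hf.1)
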